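/- arXiv:hep-th/9411184 — 2 statements merged into one kernel-verified Lean document; each statement's English description precedes it below -/
import Mathlib

section
/- In the gauge of the previous statement, the flatness of D = ∂ + ∂Φ + E₊ dz + ∂̄ + H^{−1}E₋H dz̄ (with H = e^{Φ}) is equivalent to the Hitchin equation F(D_H) + [θ, θ*] = 0, where F(D_H) = −∂̄∂Φ dz∧dz̄ and [θ,θ*] = [E₊, H^{−1}E₋H] dz∧dz̄. -/
open Complex Matrix

/-- Wirtinger derivative `∂ = (∂ₓ - i ∂_y)/2`. -/
noncomputable def wd (f : ℂ → ℂ) (z : ℂ) : ℂ :=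
  (fderiv ℝ f z 1 - Complex.I * fderiv ℝ f z Complex.I) / 2

/-- Conjugate Wirtinger derivative `∂̄ = (∂ₓ + i ∂_y)/2`. -/
noncomputable def wdb (f : ℂ → ℂ) (z : ℂ) : ℂ :=
  (fderiv ℝ f z 1 + Complex.I * fderiv ℝ f z Complex.I) / 2

/-- Entrywise Wirtinger derivative of a matrix-valued map. -/
noncomputable def wdM {n : ℕ} (A : ℂ → Matrix (Fin n) (Fin n) ℂ) (z : ℂ) :
    Matrix (Fin n) (Fin n) ℂ :=
  Matrix.of fun i j => wd (fun w => A w i j) z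

/-- Entrywise conjugate Wirtinger derivative of a matrix-valued map. -/
noncomputable def wdbM {n : ℕ} (A : ℂ → Matrix (Fin n) (Fin n) ℂ) (z : ℂ) :
    Matrix (Fin n) (Fin n) ℂ :=
  Matrix.of fun i j => wdb (fun w => A w i j) z

/-- The `i`-th simple root index, included into `Fin n`. -/
def lo {n : ℕ} (i : Fin (n - 1)) : Fin n := ⟨i.1, by have := i.isLt; omega⟩

/-- Its successor in `Fin n`. -/
def hi {n : ℕ} (i : Fin (n - 1)) : Fin n := ⟨i.1 + 1, by have := i.isLt; omega⟩

lemma wd_cexp_mul (c : ℂ) (f : ℂ → ℂ) (z : ℂ) (hf : DifferentiableAt ℝ f z) :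
    wd (fun w => c * Complex.exp (f w)) z = c * Complex.exp (f z) * wd f z := by
  have h1 : HasFDerivAt (fun w => Complex.exp (f w))
      (Complex.exp (f z) • fderiv ℝ f z) z := hf.hasFDerivAt.cexp
  have h2 : HasFDerivAt (fun w => c * Complex.exp (f w))
      ((c * Complex.exp (f z)) • fderiv ℝ f z) z := by
    simpa [mul_smul] using h1.const_mul c
  simp only [wd, h2.fderiv, ContinuousLinearMap.smul_apply, smul_eq_mul]
  ring

lemma wd_sub (f g : ℂ → ℂ) (z : ℂ) (hf : DifferentiableAt ℝ f z)
    (hg : DifferentiableAt ℝ g z) :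
    wd (fun w => f w - g w) z = wd f z - wd g z := by
  simp only [wd, fderiv_fun_sub hf hg, ContinuousLinearMap.sub_apply]
  ring

/-- in the gauge `D' = ∂ + ∂Φ + E₊`, `D'' = ∂̄ + H⁻¹E₋H` (with `H = e^Φ`),
flatness of the full connection is equivalent to Hitchin's equation
`F(D_H) + [θ,θ*] = 0`, where `F(D_H) = -∂̄∂Φ` and `[θ,θ*] = [E₊, H⁻¹E₋H]`. -/
theorem toda_flatness_iff_hitchin
    (n : ℕ) (U : Set ℂ) (hU : IsOpen U)
    (φ : Fin n → ℂ → ℝ)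
    (hsm : ∀ i, ContDiff ℝ (⊤ : ℕ∞) fun z => (φ i z : ℂ))
    (htr : ∀ z, ∑ i, φ i z = 0) :
    let φC : Fin n → ℂ → ℂ := fun i z => (φ i z : ℂ)
    let H : ℂ → Matrix (Fin n) (Fin n) ℂ := fun z =>
      Matrix.diagonal fun i => Complex.exp (φC i z)
    let Ep : Matrix (Fin n) (Fin n) ℂ :=
      ∑ i : Fin (n - 1), Matrix.single (lo i) (hi i) 1
    let X : ℂ → Matrix (Fin n) (Fin n) ℂ := fun z => (H z)⁻¹ * Epᵀ * H z
    let Az : ℂ → Matrix (Fin n) (Fin n) ℂ := fun z =>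
      Matrix.diagonal (fun i => wd (φC i) z) + Ep
    let Azb : ℂ → Matrix (Fin n) (Fin n) ℂ := fun z => X z
    (∀ z ∈ U, wdbM Az z - wdM Azb z + (Azb z * Az z - Az z * Azb z) = 0) ↔
      (∀ z ∈ U,
        -(Matrix.diagonal fun i => wdb (wd (φC i)) z) + (Ep * X z - X z * Ep) = 0) := by
  intro φC H Ep X Az Azb
  have hd : ∀ i z, DifferentiableAt ℝ (φC i) z := fun i z =>
    ((hsm i).differentiable (by simp)).differentiableAt
  -- inverse of H
  have hHinv : ∀ w, (H w)⁻¹ = Matrix.diagonal fun i => Complex.exp (-(φC i w)) := by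
    intro w
    apply Matrix.inv_eq_right_inv
    simp only [H, Matrix.diagonal_mul_diagonal, ← Complex.exp_add, add_neg_cancel,
      Complex.exp_zero, Matrix.diagonal_one]
  -- entries of X
  have hXentry : ∀ w (i j : Fin n),
      X w i j = Epᵀ i j * Complex.exp (φC j w - φC i w) := by
    intro w i j
    simp only [X, hHinv w, H, Matrix.mul_diagonal, Matrix.diagonal_mul, sub_eq_add_neg,
      Complex.exp_add]
    ring
  -- ∂ of X entrywise
  have hwdX : ∀ z, wdM X z =
      X z * Matrix.diagonal (fun i => wd (φC i) z)
        - Matrix.diagonal (fun i => wd (φC i) z) * X z := by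
    intro z
    ext i j
    have h1 : (fun w => X w i j) =
        fun w => Epᵀ i j * Complex.exp (φC j w - φC i w) := funext fun w => hXentry w i j
    have h2 : wd (fun w => X w i j) z
        = Epᵀ i j * Complex.exp (φC j z - φC i z) * (wd (φC j) z - wd (φC i) z) := by
      rw [h1, wd_cexp_mul _ _ _ ((hd j z).fun_sub (hd i z)),
        wd_sub _ _ _ (hd j z) (hd i z)]
    simp only [wdM, Matrix.of_apply, h2, Matrix.sub_apply, Matrix.mul_diagonal,
      Matrix.diagonal_mul, hXentry z i j]
    ring
  -- ∂̄ of Az entrywise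
  have hwdbAz : ∀ z, wdbM Az z = Matrix.diagonal fun i => wdb (wd (φC i)) z := by
    intro z
    ext i j
    rcases eq_or_ne i j with h | h
    · subst h
      have h1 : (fun w => Az w i i) = fun w => wd (φC i) w + Ep i i := by
        funext w
        simp [Az, Matrix.add_apply, Matrix.diagonal_apply_eq]
      simp only [wdbM, Matrix.of_apply, h1, Matrix.diagonal_apply_eq, wdb, fderiv_add_const]
    · have h1 : (fun w => Az w i j) = fun _ => Ep i j := by
        funext w
        simp [Az, Matrix.add_apply, Matrix.diagonal_apply_ne _ h]
      simp [wdbM, h1, wdb, Matrix.diagonal_apply_ne _ h, fderiv_const]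
  -- the two curvature expressions are negatives of each other
  have key : ∀ z, wdbM Az z - wdM Azb z + (Azb z * Az z - Az z * Azb z)
      = -(-(Matrix.diagonal fun i => wdb (wd (φC i)) z) + (Ep * X z - X z * Ep)) := by
    intro z
    have hAzb : Azb = X := rfl
    rw [hAzb, hwdX z, hwdbAz z]
    show _ - _ + (X z * (Matrix.diagonal (fun i => wd (φC i) z) + Ep)
      - (Matrix.diagonal (fun i => wd (φC i) z) + Ep) * X z) = _
    noncomm_ring
  constructor <;> intro h z hz <;> have hz' := h z hz
  · rw [key z] at hz'
    exact neg_eq_zero.mp hz'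
  · rw [key z]
    exact neg_eq_zero.mpr hz'
end

section
/- Let A be the diagonal endomorphism acting as (−1)^r on the r-th summand of E = ⊕_{r=0}^{n−1} E^r, let H = diag(e^{φ_r}) and define the indefinite hermitian form ⟨u,v⟩ = (Au, v)_H. Then ⟨·,·⟩ is flat with respect to the Toda connection D = D_H + θ + θ*: d⟨u,v⟩ = ⟨Du, v⟩ + ⟨u, Dv⟩ for all sections u, v. -/
open Complex Matrix

/-- Componentwise Wirtinger derivative of a vector-valued map. -/
noncomputable def wdV {n : ℕ} (u : ℂ → Fin n → ℂ) (z : ℂ) : Fin n → ℂ :=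
  fun i => wd (fun w => u w i) z

/-- Componentwise conjugate Wirtinger derivative of a vector-valued map. -/
noncomputable def wdbV {n : ℕ} (u : ℂ → Fin n → ℂ) (z : ℂ) : Fin n → ℂ :=
  fun i => wdb (fun w => u w i) z

section helpers
variable {z : ℂ}

lemma wd_const (c : ℂ) : wd (fun _ => c) z = 0 := by
  simp [wd, fderiv_const]

lemma wdb_const (c : ℂ) : wdb (fun _ => c) z = 0 := by
  simp [wdb, fderiv_const]

lemma wd_sum {ι : Type*} (s : Finset ι) (f : ι → ℂ → ℂ)
    (hf : ∀ i ∈ s, DifferentiableAt ℝ (f i) z) :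
    wd (fun w => ∑ i ∈ s, f i w) z = ∑ i ∈ s, wd (f i) z := by
  simp only [wd, fderiv_fun_sum hf, ContinuousLinearMap.coe_sum', Finset.sum_apply,
    Finset.mul_sum, ← Finset.sum_sub_distrib, ← Finset.sum_div]

lemma wdb_sum {ι : Type*} (s : Finset ι) (f : ι → ℂ → ℂ)
    (hf : ∀ i ∈ s, DifferentiableAt ℝ (f i) z) :
    wdb (fun w => ∑ i ∈ s, f i w) z = ∑ i ∈ s, wdb (f i) z := by
  simp only [wdb, fderiv_fun_sum hf, ContinuousLinearMap.coe_sum', Finset.sum_apply,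
    Finset.mul_sum, ← Finset.sum_add_distrib, ← Finset.sum_div]

lemma wd_mul (f g : ℂ → ℂ) (hf : DifferentiableAt ℝ f z) (hg : DifferentiableAt ℝ g z) :
    wd (fun w => f w * g w) z = f z * wd g z + wd f z * g z := by
  simp only [wd, fderiv_fun_mul hf hg, ContinuousLinearMap.add_apply,
    ContinuousLinearMap.smul_apply, smul_eq_mul]
  ring

lemma wdb_mul (f g : ℂ → ℂ) (hf : DifferentiableAt ℝ f z) (hg : DifferentiableAt ℝ g z) :
    wdb (fun w => f w * g w) z = f z * wdb g z + wdb f z * g z := by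
  simp only [wdb, fderiv_fun_mul hf hg, ContinuousLinearMap.add_apply,
    ContinuousLinearMap.smul_apply, smul_eq_mul]
  ring

lemma wd_star (f : ℂ → ℂ) : wd (fun w => star (f w)) z = star (wdb f z) := by
  unfold wd wdb
  rw [fderiv_star]
  simp only [ContinuousLinearMap.coe_comp', Function.comp_apply,
    ContinuousLinearEquiv.coe_coe, starL'_apply, Complex.star_def, map_div₀, map_add,
    _root_.map_mul, Complex.conj_I, map_ofNat]
  ring

lemma wdb_star (f : ℂ → ℂ) : wdb (fun w => star (f w)) z = star (wd f z) := by
  unfold wd wdb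
  rw [fderiv_star]
  simp only [ContinuousLinearMap.coe_comp', Function.comp_apply,
    ContinuousLinearEquiv.coe_coe, starL'_apply, Complex.star_def, map_div₀, map_sub,
    _root_.map_mul, Complex.conj_I, map_ofNat]
  ring

lemma wd_exp (f : ℂ → ℂ) (hf : DifferentiableAt ℝ f z) :
    wd (fun w => Complex.exp (f w)) z = Complex.exp (f z) * wd f z := by
  unfold wd
  rw [(hf.hasFDerivAt.cexp).fderiv]
  simp only [ContinuousLinearMap.smul_apply, smul_eq_mul]
  ring

lemma wdb_exp (f : ℂ → ℂ) (hf : DifferentiableAt ℝ f z) :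
    wdb (fun w => Complex.exp (f w)) z = Complex.exp (f z) * wdb f z := by
  unfold wdb
  rw [(hf.hasFDerivAt.cexp).fderiv]
  simp only [ContinuousLinearMap.smul_apply, smul_eq_mul]
  ring

lemma real_fderiv_conj {r : ℂ → ℝ} {w : ℂ} (hr : DifferentiableAt ℝ r z) :
    (starRingEnd ℂ) (fderiv ℝ (fun w => (r w : ℂ)) z w) = fderiv ℝ (fun w => (r w : ℂ)) z w := by
  have h := (Complex.ofRealCLM.hasFDerivAt.comp z hr.hasFDerivAt).fderiv
  rw [Function.comp_def] at h
  rw [show (fun w => (r w : ℂ)) = fun w => Complex.ofRealCLM (r w) from rfl, h]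
  simp [Complex.conj_ofReal]

lemma diffAt_real_of_coe {r : ℂ → ℝ} (hg : DifferentiableAt ℝ (fun w => (r w : ℂ)) z) :
    DifferentiableAt ℝ r z := by
  have h2 : r = fun w => ((r w : ℂ)).re := by funext w; simp
  rw [h2]
  exact Complex.reCLM.differentiableAt.comp z hg

lemma star_wd_real {r : ℂ → ℝ} (hg : DifferentiableAt ℝ (fun w => (r w : ℂ)) z) :
    star (wd (fun w => (r w : ℂ)) z) = wdb (fun w => (r w : ℂ)) z := by
  have hr := diffAt_real_of_coe hg
  simp only [wd, wdb, Complex.star_def, map_div₀, map_sub, _root_.map_mul, Complex.conj_I,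
    map_ofNat, real_fderiv_conj hr]
  ring

lemma star_wdb_real {r : ℂ → ℝ} (hg : DifferentiableAt ℝ (fun w => (r w : ℂ)) z) :
    star (wdb (fun w => (r w : ℂ)) z) = wd (fun w => (r w : ℂ)) z := by
  have hr := diffAt_real_of_coe hg
  simp only [wd, wdb, Complex.star_def, map_div₀, map_add, _root_.map_mul, Complex.conj_I,
    map_ofNat, real_fderiv_conj hr]
  ring

lemma star_exp_real (x : ℝ) : star (Complex.exp (x : ℂ)) = Complex.exp (x : ℂ) := by
  simp [Complex.star_def, ← Complex.exp_conj, Complex.conj_ofReal]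

lemma star_exp_neg_real (x : ℝ) : star (Complex.exp (-(x : ℂ))) = Complex.exp (-(x : ℂ)) := by
  simp [Complex.star_def, ← Complex.exp_conj, Complex.conj_ofReal]

lemma wd_term {a b : ℂ → ℂ} {r : ℂ → ℝ} (c : ℂ) {z : ℂ}
    (ha : DifferentiableAt ℝ a z) (hb : DifferentiableAt ℝ b z)
    (hr : DifferentiableAt ℝ (fun w => (r w : ℂ)) z) :
    wd (fun w => star (b w) * (Complex.exp ((r w : ℂ)) * (c * a w))) z
      = star (wdb b z) * (Complex.exp ((r z : ℂ)) * (c * a z))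
        + star (b z) * ((Complex.exp ((r z : ℂ)) * wd (fun w => ((r w : ℂ))) z) * (c * a z))
        + star (b z) * (Complex.exp ((r z : ℂ)) * (c * wd a z)) := by
  have h2 : DifferentiableAt ℝ (fun w => c * a w) z := (differentiableAt_const _).mul ha
  have h3 : DifferentiableAt ℝ (fun w => Complex.exp ((r w : ℂ))) z := hr.cexp
  rw [wd_mul _ (fun w => Complex.exp ((r w : ℂ)) * (c * a w)) hb.star (h3.mul h2), wd_mul _ _ h3 h2,
    wd_mul _ _ (differentiableAt_const c) ha, wd_exp _ hr, wd_star, wd_const]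
  ring

lemma wdb_term {a b : ℂ → ℂ} {r : ℂ → ℝ} (c : ℂ) {z : ℂ}
    (ha : DifferentiableAt ℝ a z) (hb : DifferentiableAt ℝ b z)
    (hr : DifferentiableAt ℝ (fun w => (r w : ℂ)) z) :
    wdb (fun w => star (b w) * (Complex.exp ((r w : ℂ)) * (c * a w))) z
      = star (wd b z) * (Complex.exp ((r z : ℂ)) * (c * a z))
        + star (b z) * ((Complex.exp ((r z : ℂ)) * wdb (fun w => ((r w : ℂ))) z) * (c * a z))
        + star (b z) * (Complex.exp ((r z : ℂ)) * (c * wdb a z)) := by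
  have h2 : DifferentiableAt ℝ (fun w => c * a w) z := (differentiableAt_const _).mul ha
  have h3 : DifferentiableAt ℝ (fun w => Complex.exp ((r w : ℂ))) z := hr.cexp
  rw [wdb_mul _ (fun w => Complex.exp ((r w : ℂ)) * (c * a w)) hb.star (h3.mul h2), wdb_mul _ _ h3 h2,
    wdb_mul _ _ (differentiableAt_const c) ha, wdb_exp _ hr, wdb_star, wdb_const]
  ring

end helpers

/-- the indefinite hermitian form `⟨u,v⟩ = (Au,v)_H`, with
`A = diag((-1)^r)` and `H = diag(e^{φ_r})`, is flat for the Toda connection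
`D = D_H + θ + θ*`: `d⟨u,v⟩ = ⟨Du,v⟩ + ⟨u,Dv⟩` (in `dz` and `dz̄` components). -/
theorem indefinite_hermitian_form_is_flat
    (n : ℕ) (U : Set ℂ) (hU : IsOpen U)
    (φ : Fin n → ℂ → ℝ)
    (hsm : ∀ i, ContDiff ℝ (⊤ : ℕ∞) fun z => (φ i z : ℂ))
    (htr : ∀ z, ∑ i, φ i z = 0)
    (u v : ℂ → Fin n → ℂ)
    (hu : ∀ i, ContDiff ℝ (⊤ : ℕ∞) fun z => u z i)
    (hv : ∀ i, ContDiff ℝ (⊤ : ℕ∞) fun z => v z i) :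
    let φC : Fin n → ℂ → ℂ := fun i z => (φ i z : ℂ)
    let H : ℂ → Matrix (Fin n) (Fin n) ℂ := fun z =>
      Matrix.diagonal fun i => Complex.exp (φC i z)
    let A : Matrix (Fin n) (Fin n) ℂ := Matrix.diagonal fun i => (-1 : ℂ) ^ (i : ℕ)
    let Ep : Matrix (Fin n) (Fin n) ℂ :=
      ∑ i : Fin (n - 1), Matrix.single (lo i) (hi i) 1
    let X : ℂ → Matrix (Fin n) (Fin n) ℂ := fun z => (H z)⁻¹ * Epᵀ * H z
    -- the indefinite pairing `⟨a,b⟩ = (A a, b)_H = b† H A a`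
    let ip : ℂ → (Fin n → ℂ) → (Fin n → ℂ) → ℂ := fun z a b =>
      dotProduct (star b) (H z *ᵥ (A *ᵥ a))
    -- `(1,0)` and `(0,1)` parts of the Toda connection `D`
    let Dp : (ℂ → Fin n → ℂ) → ℂ → Fin n → ℂ := fun s z =>
      wdV s z + (Matrix.diagonal (fun i => wd (φC i) z) + Ep) *ᵥ s z
    let Dpp : (ℂ → Fin n → ℂ) → ℂ → Fin n → ℂ := fun s z =>
      wdbV s z + X z *ᵥ s z
    ∀ z ∈ U,
      wd (fun w => ip w (u w) (v w)) z = ip z (Dp u z) (v z) + ip z (u z) (Dpp v z) ∧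
      wdb (fun w => ip w (u w) (v w)) z = ip z (Dpp u z) (v z) + ip z (u z) (Dp v z) := by
  intro φC H A Ep X ip Dp Dpp z hz
  classical
  have hφd : ∀ (i : Fin n) (w : ℂ), DifferentiableAt ℝ (φC i) w :=
    fun i w => ((hsm i).differentiable (by simp)).differentiableAt
  have hud : ∀ (i : Fin n) (w : ℂ), DifferentiableAt ℝ (fun z => u z i) w :=
    fun i w => ((hu i).differentiable (by simp)).differentiableAt
  have hvd : ∀ (i : Fin n) (w : ℂ), DifferentiableAt ℝ (fun z => v z i) w :=
    fun i w => ((hv i).differentiable (by simp)).differentiableAt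
  -- pairing formula
  have hip : ∀ (w : ℂ) (a b : Fin n → ℂ),
      ip w a b = ∑ j : Fin n, star (b j) * (Complex.exp (φC j w) * ((-1:ℂ)^(j:ℕ) * a j)) := by
    intro w a b
    simp only [ip, H, A, dotProduct, Matrix.mulVec_diagonal, Pi.star_apply]
  -- Ep action
  have hEp : ∀ (s : Fin n → ℂ) (j : Fin n),
      (Ep *ᵥ s) j = ∑ k : Fin (n-1), if j = lo k then s (hi k) else 0 := by
    intro s j
    simp only [Ep, Matrix.mulVec, dotProduct, Matrix.sum_apply,
      Matrix.single, Matrix.of_apply, Finset.sum_mul, ite_mul, one_mul, zero_mul]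
    rw [Finset.sum_comm]
    refine Finset.sum_congr rfl fun k _ => ?_
    by_cases h : j = lo k
    · simp [h, ite_and, Finset.sum_ite_eq]
    · simp [ite_and, h, Ne.symm h]
  have hEpT : ∀ (s : Fin n → ℂ) (j : Fin n),
      (Epᵀ *ᵥ s) j = ∑ k : Fin (n-1), if j = hi k then s (lo k) else 0 := by
    intro s j
    simp only [Ep, Matrix.transpose_sum, Matrix.mulVec, dotProduct, Matrix.sum_apply,
      Matrix.transpose_apply, Matrix.single, Matrix.of_apply, Finset.sum_mul,
      ite_mul, one_mul, zero_mul]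
    rw [Finset.sum_comm]
    refine Finset.sum_congr rfl fun k _ => ?_
    by_cases h : j = hi k
    · simp [h, ite_and, Finset.sum_ite_eq]
    · simp [ite_and, h, Ne.symm h]
  -- inverse of H
  have hHinv : (H z)⁻¹ = Matrix.diagonal (fun j => Complex.exp (-φC j z)) := by
    apply Matrix.inv_eq_left_inv
    simp only [H, Matrix.diagonal_mul_diagonal, ← Complex.exp_add, neg_add_cancel,
      Complex.exp_zero]
    simp [Matrix.diagonal_one]
  -- X action
  have hXv : ∀ (t : Fin n → ℂ) (j : Fin n),
      (X z *ᵥ t) j = ∑ k : Fin (n-1), if j = hi k then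
        Complex.exp (-φC j z) * (Complex.exp (φC (lo k) z) * t (lo k)) else 0 := by
    intro t j
    have : X z *ᵥ t = (H z)⁻¹ *ᵥ (Epᵀ *ᵥ (H z *ᵥ t)) := by
      simp only [X, Matrix.mulVec_mulVec, mul_assoc]
    rw [this, hHinv, Matrix.mulVec_diagonal, hEpT, Finset.mul_sum]
    refine Finset.sum_congr rfl fun k _ => ?_
    by_cases h : j = hi k
    · simp only [h, if_true]
      simp [H, Matrix.mulVec_diagonal]
    · simp [h]
  have hse : ∀ i : Fin n, star (Complex.exp (φC i z)) = Complex.exp (φC i z) :=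
    fun i => star_exp_real (φ i z)
  have hsen : ∀ i : Fin n, star (Complex.exp (-φC i z)) = Complex.exp (-φC i z) :=
    fun i => star_exp_neg_real (φ i z)
  -- star of X action
  have hXvs : ∀ (t : Fin n → ℂ) (j : Fin n),
      star ((X z *ᵥ t) j) = ∑ k : Fin (n-1), if j = hi k then
        Complex.exp (-φC j z) * (Complex.exp (φC (lo k) z) * star (t (lo k))) else 0 := by
    intro t j
    rw [hXv, star_sum]
    refine Finset.sum_congr rfl fun k _ => ?_
    rw [apply_ite star, star_zero, star_mul', star_mul', hse, hsen]
  -- cross-term cancellation 1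
  have cross1 : ∀ s t : Fin n → ℂ,
      (∑ j : Fin n, star (t j) * (Complex.exp (φC j z) * ((-1:ℂ)^(j:ℕ) * (Ep *ᵥ s) j)))
      + (∑ j : Fin n, star ((X z *ᵥ t) j) * (Complex.exp (φC j z) * ((-1:ℂ)^(j:ℕ) * s j)))
      = 0 := by
    intro s t
    have h1 : (∑ j : Fin n, star (t j) * (Complex.exp (φC j z) * ((-1:ℂ)^(j:ℕ) * (Ep *ᵥ s) j)))
        = ∑ k : Fin (n-1),
            star (t (lo k)) * (Complex.exp (φC (lo k) z) * ((-1:ℂ)^(k:ℕ) * s (hi k))) := by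
      simp only [hEp, Finset.mul_sum, mul_ite, mul_zero]
      rw [Finset.sum_comm]
      refine Finset.sum_congr rfl fun k _ => ?_
      rw [Finset.sum_ite_eq' Finset.univ (lo k)
        (fun j => star (t j) * (Complex.exp (φC j z) * ((-1:ℂ)^(j:ℕ) * s (hi k))))]
      simp only [Finset.mem_univ, if_true]
      rfl
    have h2 : (∑ j : Fin n, star ((X z *ᵥ t) j) * (Complex.exp (φC j z) * ((-1:ℂ)^(j:ℕ) * s j)))
        = ∑ k : Fin (n-1),
            Complex.exp (-φC (hi k) z) * (Complex.exp (φC (lo k) z) * star (t (lo k)))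
              * (Complex.exp (φC (hi k) z) * ((-1:ℂ)^((k:ℕ)+1) * s (hi k))) := by
      simp only [hXvs, Finset.sum_mul, ite_mul, zero_mul]
      rw [Finset.sum_comm]
      refine Finset.sum_congr rfl fun k _ => ?_
      rw [Finset.sum_ite_eq' Finset.univ (hi k)
        (fun j => Complex.exp (-φC j z) * (Complex.exp (φC (lo k) z) * star (t (lo k)))
          * (Complex.exp (φC j z) * ((-1:ℂ)^(j:ℕ) * s j)))]
      simp only [Finset.mem_univ, if_true]
      rfl
    rw [h1, h2, ← Finset.sum_add_distrib]
    refine Finset.sum_eq_zero fun k _ => ?_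
    have e1 : Complex.exp (-φC (hi k) z) * Complex.exp (φC (hi k) z) = 1 := by
      rw [← Complex.exp_add, neg_add_cancel, Complex.exp_zero]
    rw [pow_succ]
    linear_combination (-(star (t (lo k)) * Complex.exp (φC (lo k) z) * (-1:ℂ)^(k:ℕ)
      * s (hi k))) * e1
  -- cross-term cancellation 2
  have cross2 : ∀ s t : Fin n → ℂ,
      (∑ j : Fin n, star (t j) * (Complex.exp (φC j z) * ((-1:ℂ)^(j:ℕ) * (X z *ᵥ s) j)))
      + (∑ j : Fin n, star ((Ep *ᵥ t) j) * (Complex.exp (φC j z) * ((-1:ℂ)^(j:ℕ) * s j)))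
      = 0 := by
    intro s t
    have h1 : (∑ j : Fin n, star (t j) * (Complex.exp (φC j z) * ((-1:ℂ)^(j:ℕ) * (X z *ᵥ s) j)))
        = ∑ k : Fin (n-1),
            star (t (hi k)) * (Complex.exp (φC (hi k) z) * ((-1:ℂ)^((k:ℕ)+1)
              * (Complex.exp (-φC (hi k) z) * (Complex.exp (φC (lo k) z) * s (lo k))))) := by
      simp only [hXv, Finset.mul_sum, mul_ite, mul_zero]
      rw [Finset.sum_comm]
      refine Finset.sum_congr rfl fun k _ => ?_
      rw [Finset.sum_ite_eq' Finset.univ (hi k)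
        (fun j => star (t j) * (Complex.exp (φC j z) * ((-1:ℂ)^(j:ℕ)
          * (Complex.exp (-φC j z) * (Complex.exp (φC (lo k) z) * s (lo k))))))]
      simp only [Finset.mem_univ, if_true]
      rfl
    have h2 : (∑ j : Fin n, star ((Ep *ᵥ t) j) * (Complex.exp (φC j z) * ((-1:ℂ)^(j:ℕ) * s j)))
        = ∑ k : Fin (n-1),
            star (t (hi k)) * (Complex.exp (φC (lo k) z) * ((-1:ℂ)^(k:ℕ) * s (lo k))) := by
      have hEps : ∀ j, star ((Ep *ᵥ t) j)
          = ∑ k : Fin (n-1), if j = lo k then star (t (hi k)) else 0 := by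
        intro j
        rw [hEp, star_sum]
        exact Finset.sum_congr rfl fun k _ => by rw [apply_ite star, star_zero]
      simp only [hEps, Finset.sum_mul, ite_mul, zero_mul]
      rw [Finset.sum_comm]
      refine Finset.sum_congr rfl fun k _ => ?_
      rw [Finset.sum_ite_eq' Finset.univ (lo k)
        (fun j => star (t (hi k)) * (Complex.exp (φC j z) * ((-1:ℂ)^(j:ℕ) * s j)))]
      simp only [Finset.mem_univ, if_true]
      rfl
    rw [h1, h2, ← Finset.sum_add_distrib]
    refine Finset.sum_eq_zero fun k _ => ?_
    have e1 : Complex.exp (-φC (hi k) z) * Complex.exp (φC (hi k) z) = 1 := by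
      rw [← Complex.exp_add, neg_add_cancel, Complex.exp_zero]
    rw [pow_succ]
    linear_combination (-(star (t (hi k)) * Complex.exp (φC (lo k) z) * (-1:ℂ)^(k:ℕ)
      * s (lo k))) * e1
  -- connection components
  have hDp : ∀ (s : ℂ → Fin n → ℂ) (j : Fin n),
      Dp s z j = wd (fun w => s w j) z + (wd (φC j) z * s z j + (Ep *ᵥ s z) j) := by
    intro s j
    simp only [Dp, Pi.add_apply, Matrix.add_mulVec, Matrix.mulVec_diagonal, wdV]
  have hDpp : ∀ (s : ℂ → Fin n → ℂ) (j : Fin n),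
      Dpp s z j = wdb (fun w => s w j) z + (X z *ᵥ s z) j := by
    intro s j
    simp only [Dpp, Pi.add_apply, wdbV]
  -- the integrand as a sum
  have hipw : (fun w => ip w (u w) (v w))
      = fun w => ∑ j : Fin n, star (v w j) * (Complex.exp (φC j w) * ((-1:ℂ)^(j:ℕ) * u w j)) :=
    funext fun w => hip w (u w) (v w)
  have htermd : ∀ (j : Fin n) (w : ℂ), DifferentiableAt ℝ
      (fun w => star (v w j) * (Complex.exp (φC j w) * ((-1:ℂ)^(j:ℕ) * u w j))) w :=
    fun j w => ((hvd j w).star).mul (((hφd j w).cexp).mul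
      ((differentiableAt_const _).mul (hud j w)))
  -- LHS of equation 1
  have hL1 : wd (fun w => ip w (u w) (v w)) z
      = ∑ j : Fin n,
          (star (wdb (fun w => v w j) z) * (Complex.exp (φC j z) * ((-1:ℂ)^(j:ℕ) * u z j))
          + star (v z j) * ((Complex.exp (φC j z) * wd (φC j) z) * ((-1:ℂ)^(j:ℕ) * u z j))
          + star (v z j) * (Complex.exp (φC j z) * ((-1:ℂ)^(j:ℕ) * wd (fun w => u w j) z))) := by
    rw [hipw, wd_sum Finset.univ _ (fun j _ => htermd j z)]
    exact Finset.sum_congr rfl fun j _ =>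
      wd_term ((-1:ℂ)^(j:ℕ)) (hud j z) (hvd j z) (hφd j z)
  have hL2 : wdb (fun w => ip w (u w) (v w)) z
      = ∑ j : Fin n,
          (star (wd (fun w => v w j) z) * (Complex.exp (φC j z) * ((-1:ℂ)^(j:ℕ) * u z j))
          + star (v z j) * ((Complex.exp (φC j z) * wdb (φC j) z) * ((-1:ℂ)^(j:ℕ) * u z j))
          + star (v z j) * (Complex.exp (φC j z) * ((-1:ℂ)^(j:ℕ) * wdb (fun w => u w j) z))) := by
    rw [hipw, wdb_sum Finset.univ _ (fun j _ => htermd j z)]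
    exact Finset.sum_congr rfl fun j _ =>
      wdb_term ((-1:ℂ)^(j:ℕ)) (hud j z) (hvd j z) (hφd j z)
  constructor
  · -- equation 1
    have hR : ip z (Dp u z) (v z) + ip z (u z) (Dpp v z)
        = (∑ j : Fin n,
            (star (wdb (fun w => v w j) z) * (Complex.exp (φC j z) * ((-1:ℂ)^(j:ℕ) * u z j))
            + star (v z j) * ((Complex.exp (φC j z) * wd (φC j) z) * ((-1:ℂ)^(j:ℕ) * u z j))
            + star (v z j) * (Complex.exp (φC j z) * ((-1:ℂ)^(j:ℕ) * wd (fun w => u w j) z))))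
          + ((∑ j : Fin n, star (v z j) * (Complex.exp (φC j z)
                * ((-1:ℂ)^(j:ℕ) * (Ep *ᵥ u z) j)))
            + (∑ j : Fin n, star ((X z *ᵥ v z) j) * (Complex.exp (φC j z)
                * ((-1:ℂ)^(j:ℕ) * u z j)))) := by
      rw [hip z (Dp u z) (v z), hip z (u z) (Dpp v z), ← Finset.sum_add_distrib,
        ← Finset.sum_add_distrib, ← Finset.sum_add_distrib]
      refine Finset.sum_congr rfl fun j _ => ?_
      rw [hDp u j, hDpp v j]
      simp only [star_add]
      ring
    rw [hL1, hR, cross1 (u z) (v z), add_zero]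
  · -- equation 2
    have hR : ip z (Dpp u z) (v z) + ip z (u z) (Dp v z)
        = (∑ j : Fin n,
            (star (wd (fun w => v w j) z) * (Complex.exp (φC j z) * ((-1:ℂ)^(j:ℕ) * u z j))
            + star (v z j) * ((Complex.exp (φC j z) * wdb (φC j) z) * ((-1:ℂ)^(j:ℕ) * u z j))
            + star (v z j) * (Complex.exp (φC j z) * ((-1:ℂ)^(j:ℕ) * wdb (fun w => u w j) z))))
          + ((∑ j : Fin n, star (v z j) * (Complex.exp (φC j z)
                * ((-1:ℂ)^(j:ℕ) * (X z *ᵥ u z) j)))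
            + (∑ j : Fin n, star ((Ep *ᵥ v z) j) * (Complex.exp (φC j z)
                * ((-1:ℂ)^(j:ℕ) * u z j)))) := by
      rw [hip z (Dpp u z) (v z), hip z (u z) (Dp v z), ← Finset.sum_add_distrib,
        ← Finset.sum_add_distrib, ← Finset.sum_add_distrib]
      refine Finset.sum_congr rfl fun j _ => ?_
      rw [hDpp u j, hDp v j]
      have hsw : star (wd (φC j) z) = wdb (φC j) z := star_wd_real (hφd j z)
      simp only [star_add, star_mul', hsw]
      ring
    rw [hL2, hR, cross2 (u z) (v z), add_zero]
end
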